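/- arXiv:2104.11877 — 6 statements merged into one kernel-verified Lean document; each statement's English description precedes it below -/
import Mathlib

section
/- The open unit disk 𝔻 = {z ∈ ℂ : |z| < 1} with Möbius addition a ⊕ b = (a + b)/(1 + conj(a)·b) is a gyrogroup, with gyration given by gyr[a,b](c) = ((1 + a·conj(b))/(1 + conj(a)·b))·c. -/
open Filter Topology

class Gyrogroup (G : Type*) where
  add : G → G → G
  zero : G
  neg : G → G
  gyr : G → G → G → G
  zero_add : ∀ a, add zero a = a
  add_zero : ∀ a, add a zero = a
  zero_unique : ∀ z : G, (∀ a, add z a = a ∧ add a z = a) → z = zero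
  neg_add : ∀ a, add (neg a) a = zero
  add_neg : ∀ a, add a (neg a) = zero
  neg_unique : ∀ x y : G, add y x = zero → add x y = zero → y = neg x
  gyr_add : ∀ x y a b, gyr x y (add a b) = add (gyr x y a) (gyr x y b)
  gyr_bijective : ∀ x y, Function.Bijective (gyr x y)
  gyroassoc : ∀ x y z, add x (add y z) = add (add x y) (gyr x y z)
  loop : ∀ x y, gyr (add x y) y = gyr x y

namespace Gyrogroup

variable {G : Type*} [Gyrogroup G]

/-- Elementwise sum of two subsets: `A ⊕ B = {a ⊕ b : a ∈ A, b ∈ B}`. -/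
def sAdd (A B : Set G) : Set G := Set.image2 add A B

/-- Elementwise inverse of a subset: `⊖A = {⊖a : a ∈ A}`. -/
def sNeg (A : Set G) : Set G := neg '' A

/-- The left coset `x ⊕ H`. -/
def lcoset (x : G) (H : Set G) : Set G := (fun h => add x h) '' H

/-- The setoid identifying points with equal left cosets; `Quotient` of it is `G/H`. -/
def cosetSetoid (G : Type*) [Gyrogroup G] (H : Set G) : Setoid G :=
  ⟨fun x y => lcoset x H = lcoset y H,
    ⟨fun _ => rfl, fun h => h.symm, fun h1 h2 => h1.trans h2⟩⟩

end Gyrogroup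

/-- A (Hausdorff) topological gyrogroup: `⊕` is jointly continuous and `⊖` is continuous. -/
class TopologicalGyrogroup (G : Type*) [TopologicalSpace G] extends Gyrogroup G where
  t2 : T2Space G
  continuous_add : Continuous fun p : G × G => add p.1 p.2
  continuous_neg : Continuous neg

/-! Closure of the disk under `⊕` is the identity `|1 + āb|² - |a + b|² = (1 - |a|²)(1 - |b|²)`.
A gyration multiplies by the unimodular factor `(1 + a b̄)/(1 + ā b)`, a quotient of conjugate
numbers; rotations preserve `ā b` and so commute with `⊕`. Gyroassociativity holds because both
sides reduce to `(x + y + z + x ȳ z)/(1 + x̄ y + x̄ z + ȳ z)`. -/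

namespace Complex

open ComplexConjugate

noncomputable def mobiusAdd (a b : ℂ) : ℂ := (a + b) / (1 + conj a * b)

noncomputable def mobiusGyrFactor (a b : ℂ) : ℂ := (1 + a * conj b) / (1 + conj a * b)

theorem conj_one_add_conj_mul (a b : ℂ) : conj (1 + conj a * b) = 1 + a * conj b := by
  simp [mul_comm]

theorem one_add_conj_mul_ne_zero {a b : ℂ} (h : ‖a‖ * ‖b‖ < 1) : 1 + conj a * b ≠ 0 := by
  intro h0
  have hnorm := congrArg norm (eq_neg_of_add_eq_zero_right h0)
  rw [norm_mul, norm_conj, norm_neg, norm_one] at hnorm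
  exact h.ne hnorm

theorem normSq_one_add_conj_mul_sub_normSq_add (a b : ℂ) :
    normSq (1 + conj a * b) - normSq (a + b) = (1 - normSq a) * (1 - normSq b) := by
  simp only [normSq_apply, add_re, add_im, mul_re, mul_im, conj_re, conj_im, one_re, one_im]
  ring

theorem norm_mobiusAdd_lt_one {a b : ℂ} (ha : ‖a‖ < 1) (hb : ‖b‖ < 1) :
    ‖mobiusAdd a b‖ < 1 := by
  have hden : 0 < ‖1 + conj a * b‖ := norm_pos_iff.mpr
    (one_add_conj_mul_ne_zero (mul_lt_one_of_nonneg_of_lt_one_left (norm_nonneg a) ha hb.le))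
  have hgap : 0 < (1 - normSq a) * (1 - normSq b) := by
    rw [← Complex.sq_norm, ← Complex.sq_norm]
    exact mul_pos (sub_pos.mpr (pow_lt_one₀ (norm_nonneg a) ha two_ne_zero))
      (sub_pos.mpr (pow_lt_one₀ (norm_nonneg b) hb two_ne_zero))
  rw [mobiusAdd, norm_div, div_lt_one hden, ← sq_lt_sq₀ (norm_nonneg _) (norm_nonneg _),
    Complex.sq_norm, Complex.sq_norm]
  linarith [normSq_one_add_conj_mul_sub_normSq_add a b]

theorem norm_mobiusGyrFactor {a b : ℂ} (h : 1 + conj a * b ≠ 0) : ‖mobiusGyrFactor a b‖ = 1 := by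
  rw [mobiusGyrFactor, norm_div, ← conj_one_add_conj_mul, norm_conj,
    div_self (norm_ne_zero_iff.mpr h)]

theorem mobiusGyrFactor_mul_mobiusGyrFactor_swap {a b : ℂ} (h : 1 + conj a * b ≠ 0) :
    mobiusGyrFactor a b * mobiusGyrFactor b a = 1 := by
  have h' : 1 + a * conj b ≠ 0 := by rwa [← conj_one_add_conj_mul, map_ne_zero]
  rw [mobiusGyrFactor, mobiusGyrFactor]
  field_simp

theorem mobiusAdd_mul_mul {u : ℂ} (hu : ‖u‖ = 1) (a b : ℂ) :
    mobiusAdd (u * a) (u * b) = u * mobiusAdd a b := by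
  have hconj : conj (u * a) * (u * b) = conj a * b := by
    rw [map_mul, mul_mul_mul_comm, conj_mul', hu]; simp
  rw [mobiusAdd, mobiusAdd, hconj, ← mul_add, mul_div_assoc]

theorem mobiusAdd_mobiusAdd {y z : ℂ} (x : ℂ) (hyz : 1 + conj y * z ≠ 0) :
    mobiusAdd x (mobiusAdd y z) =
      (x + y + z + x * conj y * z) / (1 + conj x * y + conj x * z + conj y * z) := by
  have hnum : x + (y + z) / (1 + conj y * z) =
      (x + y + z + x * conj y * z) / (1 + conj y * z) := by
    rw [eq_div_iff hyz, add_mul, div_mul_cancel₀ _ hyz]; ring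
  have hden : 1 + conj x * ((y + z) / (1 + conj y * z)) =
      (1 + conj x * y + conj x * z + conj y * z) / (1 + conj y * z) := by
    rw [eq_div_iff hyz, add_mul, mul_assoc, div_mul_cancel₀ _ hyz]; ring
  rw [mobiusAdd, mobiusAdd, hnum, hden, div_div_div_cancel_right₀ hyz]

theorem mobiusAdd_mobiusAdd_mobiusGyrFactor_mul {x y : ℂ} (z : ℂ) (hxy : 1 + conj x * y ≠ 0) :
    mobiusAdd (mobiusAdd x y) (mobiusGyrFactor x y * z) =
      (x + y + z + x * conj y * z) / (1 + conj x * y + conj x * z + conj y * z) := by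
  have hyx : 1 + x * conj y ≠ 0 := by rwa [← conj_one_add_conj_mul, map_ne_zero]
  have hnum : (x + y) / (1 + conj x * y) + (1 + x * conj y) / (1 + conj x * y) * z =
      (x + y + z + x * conj y * z) / (1 + conj x * y) := by
    rw [div_mul_eq_mul_div, ← add_div]; ring
  have hden : 1 + conj (x + y) / (1 + x * conj y) * ((1 + x * conj y) / (1 + conj x * y) * z) =
      (1 + conj x * y + conj x * z + conj y * z) / (1 + conj x * y) := by
    rw [← mul_assoc, div_mul_div_cancel₀ hyx, eq_div_iff hxy, add_mul, div_mul_eq_mul_div,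
      div_mul_cancel₀ _ hxy, map_add]
    ring
  rw [mobiusAdd, mobiusAdd, mobiusGyrFactor, map_div₀, conj_one_add_conj_mul, hnum, hden,
    div_div_div_cancel_right₀ hxy]

theorem mobiusAdd_gyroassoc {x y z : ℂ} (hxy : 1 + conj x * y ≠ 0) (hyz : 1 + conj y * z ≠ 0) :
    mobiusAdd x (mobiusAdd y z) = mobiusAdd (mobiusAdd x y) (mobiusGyrFactor x y * z) := by
  rw [mobiusAdd_mobiusAdd x hyz, mobiusAdd_mobiusAdd_mobiusGyrFactor_mul z hxy]

theorem mobiusGyrFactor_mobiusAdd_left {x y : ℂ} (hxy : 1 + conj x * y ≠ 0)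
    (h : 1 + conj (mobiusAdd x y) * y ≠ 0) :
    mobiusGyrFactor (mobiusAdd x y) y = mobiusGyrFactor x y := by
  have hyx : 1 + x * conj y ≠ 0 := by rwa [← conj_one_add_conj_mul, map_ne_zero]
  have hleft : 1 + mobiusAdd x y * conj y =
      (1 + conj x * y + x * conj y + y * conj y) / (1 + conj x * y) := by
    rw [mobiusAdd, eq_div_iff hxy, add_mul, div_mul_eq_mul_div, div_mul_cancel₀ _ hxy]; ring
  have hright : 1 + conj (mobiusAdd x y) * y =
      (1 + conj x * y + x * conj y + y * conj y) / (1 + x * conj y) := by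
    rw [mobiusAdd, map_div₀, conj_one_add_conj_mul, eq_div_iff hyx, add_mul, div_mul_eq_mul_div,
      div_mul_cancel₀ _ hyx, map_add]
    ring
  rw [hright, div_ne_zero_iff] at h
  rw [mobiusGyrFactor, hleft, hright, div_div_div_cancel_left' _ _ h.1, mobiusGyrFactor]

end Complex

section UnitDisc

open Complex ComplexConjugate

local notation "𝔻" => {z : ℂ // ‖z‖ < 1}

theorem one_add_conj_mul_ne_zero_of_mem_disc (a b : 𝔻) : 1 + conj (a : ℂ) * b ≠ 0 :=
  one_add_conj_mul_ne_zero (mul_lt_one_of_nonneg_of_lt_one_left (norm_nonneg _) a.2 b.2.le)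

noncomputable def mobiusGyr (a b c : 𝔻) : 𝔻 :=
  ⟨mobiusGyrFactor a b * c, by
    rw [norm_mul, norm_mobiusGyrFactor (one_add_conj_mul_ne_zero_of_mem_disc a b), one_mul]
    exact c.2⟩

theorem mobiusGyr_mobiusGyr_swap (a b c : 𝔻) : mobiusGyr b a (mobiusGyr a b c) = c :=
  Subtype.ext <| by
    change mobiusGyrFactor b a * (mobiusGyrFactor a b * c) = c
    rw [← mul_assoc,
      mobiusGyrFactor_mul_mobiusGyrFactor_swap (one_add_conj_mul_ne_zero_of_mem_disc b a), one_mul]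

noncomputable instance mobiusGyrogroup : Gyrogroup 𝔻 where
  add a b := ⟨mobiusAdd a b, norm_mobiusAdd_lt_one a.2 b.2⟩
  zero := ⟨0, by simp⟩
  neg a := ⟨-a, by simpa using a.2⟩
  gyr := mobiusGyr
  zero_add a := Subtype.ext (by simp [mobiusAdd])
  add_zero a := Subtype.ext (by simp [mobiusAdd])
  zero_unique z h :=
    Subtype.ext (by simpa [mobiusAdd] using congrArg Subtype.val (h ⟨0, by simp⟩).1)
  neg_add a := Subtype.ext (by simp [mobiusAdd])
  add_neg a := Subtype.ext (by simp [mobiusAdd])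
  neg_unique x y h _ := Subtype.ext <| by
    have hsum : mobiusAdd y x = 0 := congrArg Subtype.val h
    rw [mobiusAdd, div_eq_zero_iff] at hsum
    exact eq_neg_of_add_eq_zero_left
      (hsum.resolve_right (one_add_conj_mul_ne_zero_of_mem_disc y x))
  gyr_add x y a b := Subtype.ext
    (mobiusAdd_mul_mul (norm_mobiusGyrFactor (one_add_conj_mul_ne_zero_of_mem_disc x y)) a b).symm
  gyr_bijective x y := Function.bijective_iff_has_inverse.mpr
    ⟨mobiusGyr y x, mobiusGyr_mobiusGyr_swap x y, mobiusGyr_mobiusGyr_swap y x⟩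
  gyroassoc x y z := Subtype.ext
    (mobiusAdd_gyroassoc (one_add_conj_mul_ne_zero_of_mem_disc x y)
      (one_add_conj_mul_ne_zero_of_mem_disc y z))
  loop x y := funext fun c => Subtype.ext <| congrArg (· * (c : ℂ))
    (mobiusGyrFactor_mobiusAdd_left (one_add_conj_mul_ne_zero_of_mem_disc x y)
      (one_add_conj_mul_ne_zero_of_mem_disc ⟨_, norm_mobiusAdd_lt_one x.2 y.2⟩ y))

end UnitDisc

/-- The open unit disk with Möbius addition is a gyrogroup, with gyration
`gyr[a,b](c) = ((1 + a·conj b)/(1 + conj a·b))·c`. -/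
theorem mobius_gyrogroup :
    ∃ inst : Gyrogroup {z : ℂ // ‖z‖ < 1},
      (∀ a b : {z : ℂ // ‖z‖ < 1},
        ((@Gyrogroup.add _ inst a b : {z : ℂ // ‖z‖ < 1}) : ℂ) =
          ((a : ℂ) + (b : ℂ)) / (1 + (starRingEnd ℂ) (a : ℂ) * (b : ℂ))) ∧
      (∀ a b c : {z : ℂ // ‖z‖ < 1},
        ((@Gyrogroup.gyr _ inst a b c : {z : ℂ // ‖z‖ < 1}) : ℂ) =
          ((1 + (a : ℂ) * (starRingEnd ℂ) (b : ℂ)) /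
            (1 + (starRingEnd ℂ) (a : ℂ) * (b : ℂ))) * (c : ℂ)) :=
  ⟨mobiusGyrogroup, fun _ _ => rfl, fun _ _ _ => rfl⟩
end

section
/- Let G be a strongly topological gyrogroup with symmetric neighborhood base 𝒰 at 0, and let U ∈ 𝒰. Define U₀ = U and U_{n+1} = ⊖(U_n ⊕ U_n) ∪ (U_n ⊕ U_n) for n ∈ ℕ, and set H = ⋃_{n∈ℕ} U_n. Then H is a subgyrogroup of G: H = ⊖H and H is closed under ⊕. -/
open Filter Topology

/-- The union `H = ⋃ₙ Uₙ` of the sets `U₀ = U`, `U_{n+1} = ⊖(Uₙ ⊕ Uₙ) ∪ (Uₙ ⊕ Uₙ)`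
is a subgyrogroup: `⊖H = H` and `H ⊕ H ⊆ H`. -/
theorem strong_subgyrogroup_closure {G : Type*} [TopologicalSpace G] [TopologicalGyrogroup G]
    (𝒰 : Set (Set G))
    (hbasis : (𝓝 (Gyrogroup.zero : G)).HasBasis (fun U : Set G => U ∈ 𝒰) id)
    (hsym : ∀ U ∈ 𝒰, Gyrogroup.sNeg U = U)
    (hgyr : ∀ U ∈ 𝒰, ∀ x y : G, Gyrogroup.gyr x y '' U = U)
    (U : Set G) (hU : U ∈ 𝒰)
    (Useq : ℕ → Set G) (h0 : Useq 0 = U)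
    (hrec : ∀ n : ℕ, Useq (n + 1) =
      Gyrogroup.sNeg (Gyrogroup.sAdd (Useq n) (Useq n)) ∪ Gyrogroup.sAdd (Useq n) (Useq n))
    (H : Set G) (hH : H = ⋃ n, Useq n) :
    Gyrogroup.sNeg H = H ∧ Gyrogroup.sAdd H H ⊆ H := by
  classical
  have hzU : Gyrogroup.zero ∈ U := mem_of_mem_nhds (hbasis.mem_of_mem hU)
  have hnegneg : ∀ a : G, Gyrogroup.neg (Gyrogroup.neg a) = a := by
    intro a
    exact (Gyrogroup.neg_unique (Gyrogroup.neg a) a (Gyrogroup.add_neg a)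
      (Gyrogroup.neg_add a)).symm
  have hz : ∀ n, Gyrogroup.zero ∈ Useq n := by
    intro n
    induction n with
    | zero => rw [h0]; exact hzU
    | succ n ih =>
      rw [hrec n]
      right
      have : Gyrogroup.add Gyrogroup.zero Gyrogroup.zero = (Gyrogroup.zero : G) :=
        Gyrogroup.zero_add _
      exact ⟨_, ih, _, ih, this⟩
  have hmono : ∀ n, Useq n ⊆ Useq (n + 1) := by
    intro n a ha
    rw [hrec n]
    right
    exact ⟨a, ha, _, hz n, Gyrogroup.add_zero a⟩
  have hmono' : Monotone Useq := monotone_nat_of_le_succ hmono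
  have hnegmem : ∀ n, ∀ a ∈ Useq n, Gyrogroup.neg a ∈ Useq (n + 1) := by
    intro n a ha
    rw [hrec n]
    left
    exact ⟨_, ⟨a, ha, _, hz n, Gyrogroup.add_zero a⟩, rfl⟩
  have hHneg : ∀ a ∈ H, Gyrogroup.neg a ∈ H := by
    intro a ha
    rw [hH] at ha ⊢
    obtain ⟨s, ⟨n, rfl⟩, ha⟩ := ha
    exact Set.mem_iUnion.2 ⟨n + 1, hnegmem n a ha⟩
  constructor
  · apply Set.Subset.antisymm
    · rintro x ⟨a, ha, rfl⟩
      exact hHneg a ha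
    · intro a ha
      exact ⟨Gyrogroup.neg a, hHneg a ha, hnegneg a⟩
  · rintro x ⟨a, ha, b, hb, rfl⟩
    rw [hH] at ha hb ⊢
    obtain ⟨s, ⟨m, rfl⟩, ha⟩ := ha
    obtain ⟨t, ⟨n, rfl⟩, hb⟩ := hb
    refine Set.mem_iUnion.2 ⟨max m n + 1, ?_⟩
    rw [hrec]
    right
    exact ⟨a, hmono' (le_max_left m n) ha, b, hmono' (le_max_right m n) hb, rfl⟩
end

section
/- Let G be a gyrogroup and N : G → ℝ a prenorm (N(0) = 0, N(x ⊕ y) ≤ N(x) + N(y), N(⊖x) = N(x)) satisfying N(gyr[x,y](z)) = N(z) for all x, y, z ∈ G. Let H be an L-subgyrogroup of G with N(h) = 0 for each h ∈ H. Then N(x ⊕ h) = N(x) for every x ∈ G and h ∈ H. -/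
open Filter Topology

/-- `H` is an L-subgyrogroup of `G`. -/
def IsLSubgyrogroup {G : Type*} [Gyrogroup G] (H : Set G) : Prop :=
  Gyrogroup.zero ∈ H ∧ (∀ h ∈ H, Gyrogroup.neg h ∈ H) ∧
  (∀ a ∈ H, ∀ b ∈ H, Gyrogroup.add a b ∈ H) ∧
  (∀ a : G, ∀ h ∈ H, Gyrogroup.gyr a h '' H = H)

/-- If `N` is a gyration-invariant prenorm vanishing on an L-subgyrogroup `H`,
then `N(x ⊕ h) = N(x)` for all `x ∈ G`, `h ∈ H`. -/
theorem prenorm_right_coset_invariant {G : Type*} [Gyrogroup G] (N : G → ℝ)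
    (hN0 : N Gyrogroup.zero = 0)
    (hNsub : ∀ x y : G, N (Gyrogroup.add x y) ≤ N x + N y)
    (hNneg : ∀ x : G, N (Gyrogroup.neg x) = N x)
    (hNgyr : ∀ x y z : G, N (Gyrogroup.gyr x y z) = N z)
    (H : Set G) (hH : IsLSubgyrogroup H) (hvanish : ∀ h ∈ H, N h = 0) :
    ∀ x : G, ∀ h ∈ H, N (Gyrogroup.add x h) = N x := by
  intro x h hh
  have key : Gyrogroup.add (Gyrogroup.add x h) (Gyrogroup.gyr x h (Gyrogroup.neg h)) = x := by
    rw [← Gyrogroup.gyroassoc, Gyrogroup.add_neg, Gyrogroup.add_zero]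
  have h1 : N (Gyrogroup.add x h) ≤ N x := by
    calc N (Gyrogroup.add x h) ≤ N x + N h := hNsub x h
    _ = N x := by rw [hvanish h hh, add_zero]
  have h2 : N x ≤ N (Gyrogroup.add x h) := by
    calc N x = N (Gyrogroup.add (Gyrogroup.add x h) (Gyrogroup.gyr x h (Gyrogroup.neg h))) := by rw [key]
    _ ≤ N (Gyrogroup.add x h) + N (Gyrogroup.gyr x h (Gyrogroup.neg h)) := hNsub _ _
    _ = N (Gyrogroup.add x h) := by rw [hNgyr, hNneg, hvanish h hh, add_zero]
  linarith
end

section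
/- Let G be a gyrogroup and N : G → ℝ a prenorm with N(gyr[x,y](z)) = N(z) for all x, y, z ∈ G, and H an L-subgyrogroup such that N vanishes exactly on H and N(x ⊕ h) = N(x) for all x ∈ G, h ∈ H. Define ϱ on the left coset space G/H by ϱ(x ⊕ H, y ⊕ H) = N(⊖x ⊕ y) + N(⊖y ⊕ x). Then ϱ is well-defined and is a metric on G/H. -/
open Filter Topology

namespace Gyrogroup

variable {G : Type*} [Gyrogroup G]

lemma my_add_left_cancel {a b c : G} (h : add a b = add a c) : b = c := by
  have h2 : add (neg a) (add a b) = add (neg a) (add a c) := by rw [h]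
  rw [gyroassoc, gyroassoc, neg_add, zero_add, zero_add] at h2
  exact (gyr_bijective (neg a) a).1 h2

lemma my_gyr_zero (y z : G) : gyr (zero : G) y z = z := by
  have := gyroassoc (zero : G) y z
  rw [zero_add, zero_add] at this
  exact (my_add_left_cancel this).symm

lemma my_gyr_neg_add (a z : G) : gyr (neg a) a z = z := by
  have := loop (neg a) a
  rw [neg_add] at this
  rw [← this, my_gyr_zero]

lemma my_gyr_add_neg (a z : G) : gyr a (neg a) z = z := by
  have := loop a (neg a)
  rw [add_neg] at this
  rw [← this, my_gyr_zero]

lemma my_neg_add_cancel_left (a b : G) : add (neg a) (add a b) = b := by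
  rw [gyroassoc, neg_add, zero_add, my_gyr_neg_add]

lemma my_add_neg_cancel_left (a b : G) : add a (add (neg a) b) = b := by
  rw [gyroassoc, add_neg, zero_add, my_gyr_add_neg]

lemma my_eq_neg_of_add_eq_zero {a b : G} (h : add a b = zero) : b = neg a := by
  have : add (neg a) (add a b) = add (neg a) zero := by rw [h]
  rwa [my_neg_add_cancel_left, add_zero] at this

lemma my_decomp (a b c : G) :
    add (neg a) b = add (add (neg a) c) (gyr (neg a) c (add (neg c) b)) := by
  rw [← gyroassoc, my_add_neg_cancel_left]

end Gyrogroup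

/-- `ϱ(x ⊕ H, y ⊕ H) = N(⊖x ⊕ y) + N(⊖y ⊕ x)` is well defined on cosets and is a
metric on the coset space `G/H`. -/
theorem coset_prenorm_metric {G : Type*} [Gyrogroup G] (N : G → ℝ)
    (hN0 : N Gyrogroup.zero = 0)
    (hNsub : ∀ x y : G, N (Gyrogroup.add x y) ≤ N x + N y)
    (hNneg : ∀ x : G, N (Gyrogroup.neg x) = N x)
    (hNgyr : ∀ x y z : G, N (Gyrogroup.gyr x y z) = N z)
    (H : Set G) (hH : IsLSubgyrogroup H)
    (hvanish : ∀ x : G, N x = 0 ↔ x ∈ H)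
    (hright : ∀ x : G, ∀ h ∈ H, N (Gyrogroup.add x h) = N x)
    (ρ : G → G → ℝ)
    (hρ : ∀ x y : G, ρ x y =
      N (Gyrogroup.add (Gyrogroup.neg x) y) + N (Gyrogroup.add (Gyrogroup.neg y) x)) :
    (∀ x x' y y' : G, x' ∈ Gyrogroup.lcoset x H → y' ∈ Gyrogroup.lcoset y H →
      ρ x y = ρ x' y') ∧
    (∀ x y : G, 0 ≤ ρ x y) ∧
    (∀ x y : G, ρ x y = 0 ↔ Gyrogroup.lcoset x H = Gyrogroup.lcoset y H) ∧
    (∀ x y : G, ρ x y = ρ y x) ∧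
    (∀ x y z : G, ρ x y ≤ ρ x z + ρ z y) := by
  open Gyrogroup in
  have Nnn : ∀ x : G, 0 ≤ N x := by
    intro x
    have h := hNsub x (neg x)
    rw [Gyrogroup.add_neg, hN0, hNneg] at h
    linarith
  have symmH : ∀ x y : G, N (Gyrogroup.add (Gyrogroup.neg x) y) = 0 →
      N (Gyrogroup.add (Gyrogroup.neg y) x) = 0 := by
    intro x y h
    have hd := Gyrogroup.my_decomp y y x
    rw [Gyrogroup.neg_add] at hd
    have hk := Gyrogroup.my_eq_neg_of_add_eq_zero hd.symm
    have : N (Gyrogroup.add (Gyrogroup.neg y) x) =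
        N (Gyrogroup.gyr (Gyrogroup.neg y) x (Gyrogroup.add (Gyrogroup.neg x) y)) := by
      rw [hk, hNneg]
    rw [this, hNgyr, h]
  have leW : ∀ x y z : G, N (Gyrogroup.add (Gyrogroup.neg x) y) ≤
      N (Gyrogroup.add (Gyrogroup.neg x) z) + N (Gyrogroup.add (Gyrogroup.neg z) y) := by
    intro x y z
    calc N (Gyrogroup.add (Gyrogroup.neg x) y)
        = N (Gyrogroup.add (Gyrogroup.add (Gyrogroup.neg x) z)
            (Gyrogroup.gyr (Gyrogroup.neg x) z (Gyrogroup.add (Gyrogroup.neg z) y))) := by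
          rw [← Gyrogroup.my_decomp]
      _ ≤ _ := by
          refine (hNsub _ _).trans ?_
          rw [hNgyr]
  have Nfix : ∀ x x' : G, N (Gyrogroup.add (Gyrogroup.neg x) x') = 0 → ∀ y : G,
      N (Gyrogroup.add (Gyrogroup.neg x') y) = N (Gyrogroup.add (Gyrogroup.neg x) y) := by
    intro x x' h y
    have h' := symmH x x' h
    apply le_antisymm
    · have := leW x' y x; rw [h'] at this; linarith
    · have := leW x y x'; rw [h] at this; linarith
  have Nfix2 : ∀ x x' : G, N (Gyrogroup.add (Gyrogroup.neg x) x') = 0 → ∀ y : G,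
      N (Gyrogroup.add (Gyrogroup.neg y) x') = N (Gyrogroup.add (Gyrogroup.neg y) x) := by
    intro x x' h y
    have h' := symmH x x' h
    apply le_antisymm
    · have := leW y x' x; rw [h] at this; linarith
    · have := leW y x x'; rw [h'] at this; linarith
  have memN : ∀ x x' : G, x' ∈ Gyrogroup.lcoset x H →
      N (Gyrogroup.add (Gyrogroup.neg x) x') = 0 := by
    rintro x x' ⟨h, hh, rfl⟩
    rw [Gyrogroup.my_neg_add_cancel_left]
    exact (hvanish h).mpr hh
  have cosEq : ∀ x y : G, N (Gyrogroup.add (Gyrogroup.neg x) y) = 0 →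
      Gyrogroup.lcoset y H ⊆ Gyrogroup.lcoset x H := by
    rintro x y hxy _ ⟨h, hh, rfl⟩
    refine ⟨Gyrogroup.add (Gyrogroup.neg x) (Gyrogroup.add y h), ?_, ?_⟩
    · apply (hvanish _).mp
      apply le_antisymm _ (Nnn _)
      have := leW x (Gyrogroup.add y h) y
      rw [hxy, Gyrogroup.my_neg_add_cancel_left, (hvanish h).mpr hh] at this
      linarith
    · exact Gyrogroup.my_add_neg_cancel_left _ _
  have cosIff : ∀ x y : G, Gyrogroup.lcoset x H = Gyrogroup.lcoset y H ↔
      N (Gyrogroup.add (Gyrogroup.neg x) y) = 0 := by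
    intro x y
    constructor
    · intro h
      apply memN
      rw [h]
      exact ⟨Gyrogroup.zero, hH.1, Gyrogroup.add_zero y⟩
    · intro h
      exact Set.Subset.antisymm (cosEq y x (symmH x y h)) (cosEq x y h)
  refine ⟨?_, ?_, ?_, ?_, ?_⟩
  · rintro x x' y y' hx hy
    have hxx := memN x x' hx
    have hyy := memN y y' hy
    rw [hρ, hρ, Nfix x x' hxx y', Nfix y y' hyy x', Nfix2 y y' hyy x, Nfix2 x x' hxx y]
  · intro x y
    rw [hρ]
    have := Nnn (Gyrogroup.add (Gyrogroup.neg x) y)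
    have := Nnn (Gyrogroup.add (Gyrogroup.neg y) x)
    linarith
  · intro x y
    rw [hρ, cosIff]
    constructor
    · intro h
      have h1 := Nnn (Gyrogroup.add (Gyrogroup.neg x) y)
      have h2 := Nnn (Gyrogroup.add (Gyrogroup.neg y) x)
      linarith
    · intro h
      rw [h, symmH x y h]; ring
  · intro x y
    rw [hρ, hρ]
    ring
  · intro x y z
    rw [hρ, hρ, hρ]
    have h1 := leW x y z
    have h2 := leW y x z
    linarith
end

section
/- Let G be a strongly topological gyrogroup with symmetric neighborhood base 𝒰 at 0 and H an admissible subgyrogroup generated from 𝒰. If H is neutral and sequences (a_n), (b_n) in G satisfy π(a_n) → π(0) and π(b_n) → π(0) in the quotient space G/H, then π(⊖a_n) → π(0). -/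
open Filter Topology

namespace GyroAux
open Gyrogroup

variable {G : Type*} [Gyrogroup G]

theorem add_left_cancel {a x y : G} (h : add a x = add a y) : x = y := by
  have h2 : add (neg a) (add a x) = add (neg a) (add a y) := by rw [h]
  rw [gyroassoc, gyroassoc, Gyrogroup.neg_add, Gyrogroup.zero_add, Gyrogroup.zero_add] at h2
  exact (gyr_bijective (neg a) a).1 h2

theorem gyr_zero_left (y z : G) : gyr (zero : G) y z = z := by
  have := gyroassoc (zero : G) y z
  rw [Gyrogroup.zero_add, Gyrogroup.zero_add] at this
  exact (add_left_cancel this).symm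

theorem gyr_neg_self (a z : G) : gyr (neg a) a z = z := by
  have h := loop (neg a) a
  rw [Gyrogroup.neg_add] at h
  rw [← h, gyr_zero_left]

theorem left_cancel (a b : G) : add (neg a) (add a b) = b := by
  rw [gyroassoc, Gyrogroup.neg_add, Gyrogroup.zero_add, gyr_neg_self]

theorem eq_neg_of_add_eq_zero {x y : G} (h : add x y = zero) : y = neg x :=
  add_left_cancel (h.trans (Gyrogroup.add_neg x).symm)

theorem neg_neg (a : G) : neg (neg a) = a :=
  (eq_neg_of_add_eq_zero (Gyrogroup.neg_add a)).symm

theorem neg_zero : (neg zero : G) = zero :=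
  (eq_neg_of_add_eq_zero (Gyrogroup.zero_add (zero : G))).symm

theorem add_neg_cancel_left (a b : G) : add a (add (neg a) b) = b := by
  have := left_cancel (neg a) b
  rwa [neg_neg] at this

theorem gyr_zero (x y : G) : gyr x y zero = zero := by
  have h : add (gyr x y zero) (gyr x y zero) = gyr x y zero := by
    rw [← gyr_add, Gyrogroup.zero_add]
  have h2 : add (gyr x y zero) zero = add (gyr x y zero) (gyr x y zero) := by
    rw [h, Gyrogroup.add_zero]
  exact (add_left_cancel h2).symm

theorem gyr_neg (x y a : G) : gyr x y (neg a) = neg (gyr x y a) := by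
  apply eq_neg_of_add_eq_zero
  rw [← gyr_add, Gyrogroup.add_neg, gyr_zero]

theorem star (a b : G) : add (add a b) (gyr a b (neg b)) = a := by
  rw [← gyroassoc, Gyrogroup.add_neg, Gyrogroup.add_zero]

theorem star2 (x h : G) : add (add x h) (gyr (add x h) h (neg h)) = x := by
  rw [loop, star]

theorem neg_add_rev (a b : G) : neg (add a b) = gyr a b (add (neg b) (neg a)) := by
  symm
  apply eq_neg_of_add_eq_zero
  rw [← gyroassoc,
    show add b (add (neg b) (neg a)) = neg a from add_neg_cancel_left b (neg a),
    Gyrogroup.add_neg]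

theorem gyr_eq (x y z : G) :
    gyr x y z = add (neg (add x y)) (add x (add y z)) := by
  rw [gyroassoc x y z, left_cancel]

end GyroAux

section TopAux
open Gyrogroup

variable {G : Type*} [TopologicalSpace G] [TopologicalGyrogroup G]

theorem GyroAux.cont_add {α : Type*} [TopologicalSpace α] {f g : α → G}
    (hf : Continuous f) (hg : Continuous g) : Continuous fun x => add (f x) (g x) :=
  TopologicalGyrogroup.continuous_add.comp (hf.prodMk hg)

theorem GyroAux.cont_neg {α : Type*} [TopologicalSpace α] {f : α → G}
    (hf : Continuous f) : Continuous fun x => neg (f x) :=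
  TopologicalGyrogroup.continuous_neg.comp hf

end TopAux

/-- If `H` is a neutral admissible subgyrogroup and `π(aₙ) → π(0)`, `π(bₙ) → π(0)`
in `G/H`, then `π(⊖aₙ) → π(0)`. -/
theorem quotient_neg_tendsto {G : Type*} [TopologicalSpace G] [TopologicalGyrogroup G]
(𝒰 : Set (Set G))
    (hbasis : (𝓝 (Gyrogroup.zero : G)).HasBasis (fun U : Set G => U ∈ 𝒰) id)
    (hsym : ∀ U ∈ 𝒰, Gyrogroup.sNeg U = U)
    (hgyr : ∀ U ∈ 𝒰, ∀ x y : G, Gyrogroup.gyr x y '' U = U)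
    (Useq : ℕ → Set G) (hmem : ∀ n, Useq n ∈ 𝒰) (hopen : ∀ n, IsOpen (Useq n))
    (hchain : ∀ n : ℕ, Gyrogroup.sAdd (Useq (n + 1))
      (Gyrogroup.sAdd (Useq (n + 1)) (Useq (n + 1))) ⊆ Useq n)
    (H : Set G) (hH : H = ⋂ n, Useq n)
    (hneutral : ∀ U : Set G, IsOpen U → Gyrogroup.zero ∈ U →
      ∃ V : Set G, IsOpen V ∧ Gyrogroup.zero ∈ V ∧
        Gyrogroup.sAdd H V ⊆ Gyrogroup.sAdd U H)
    (a b : ℕ → G)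
    (ha : Tendsto (fun n => Quotient.mk (Gyrogroup.cosetSetoid G H) (a n)) atTop
      (𝓝 (Quotient.mk (Gyrogroup.cosetSetoid G H) Gyrogroup.zero)))
    (hb : Tendsto (fun n => Quotient.mk (Gyrogroup.cosetSetoid G H) (b n)) atTop
      (𝓝 (Quotient.mk (Gyrogroup.cosetSetoid G H) Gyrogroup.zero))) :
    Tendsto (fun n => Quotient.mk (Gyrogroup.cosetSetoid G H) (Gyrogroup.neg (a n))) atTop
      (𝓝 (Quotient.mk (Gyrogroup.cosetSetoid G H) Gyrogroup.zero)) := by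
  classical
  clear hb b
  open Gyrogroup in
  -- basic membership facts about H
  have hzU : ∀ n, (Gyrogroup.zero : G) ∈ Useq n := fun n =>
    mem_of_mem_nhds (hbasis.mem_of_mem (hmem n))
  have h0H : (Gyrogroup.zero : G) ∈ H := by
    rw [hH]; exact Set.mem_iInter.2 hzU
  have hnegH : ∀ h ∈ H, Gyrogroup.neg h ∈ H := by
    intro h hh
    rw [hH] at hh ⊢
    refine Set.mem_iInter.2 fun n => ?_
    rw [← hsym (Useq n) (hmem n)]
    exact ⟨h, Set.mem_iInter.1 hh n, rfl⟩
  have haddH : ∀ h ∈ H, ∀ h' ∈ H, Gyrogroup.add h h' ∈ H := by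
    intro h hh h' hh'
    rw [hH] at hh hh' ⊢
    refine Set.mem_iInter.2 fun n => ?_
    apply hchain n
    exact ⟨h, Set.mem_iInter.1 hh (n + 1),
      Gyrogroup.add h' Gyrogroup.zero,
      ⟨h', Set.mem_iInter.1 hh' (n + 1), Gyrogroup.zero, hzU (n + 1), rfl⟩,
      by rw [Gyrogroup.add_zero]⟩
  have hgyrH : ∀ x y : G, ∀ h ∈ H, Gyrogroup.gyr x y h ∈ H := by
    intro x y h hh
    rw [hH] at hh ⊢
    refine Set.mem_iInter.2 fun n => ?_
    rw [← hgyr (Useq n) (hmem n) x y]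
    exact ⟨h, Set.mem_iInter.1 hh n, rfl⟩
  have hgyrHsurj : ∀ x y : G, ∀ h ∈ H, ∃ z ∈ H, Gyrogroup.gyr x y z = h := by
    intro x y h hh
    obtain ⟨z, hz⟩ := (Gyrogroup.gyr_bijective x y).2 h
    refine ⟨z, ?_, hz⟩
    rw [hH] at hh ⊢
    refine Set.mem_iInter.2 fun n => ?_
    have h1 : h ∈ Gyrogroup.gyr x y '' Useq n := by
      rw [hgyr (Useq n) (hmem n) x y]; exact Set.mem_iInter.1 hh n
    obtain ⟨z', hz', hz'e⟩ := h1
    have : z' = z := (Gyrogroup.gyr_bijective x y).1 (hz'e.trans hz.symm)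
    rwa [← this]
  -- coset lemma
  have hco : ∀ x : G, ∀ h ∈ H,
      Gyrogroup.lcoset (Gyrogroup.add x h) H = Gyrogroup.lcoset x H := by
    intro x h hh
    ext y
    constructor
    · rintro ⟨h', hh', rfl⟩
      obtain ⟨z, hz, hze⟩ := hgyrHsurj x h h' hh'
      refine ⟨Gyrogroup.add h z, haddH h hh z hz, ?_⟩
      show Gyrogroup.add x (Gyrogroup.add h z) = Gyrogroup.add (Gyrogroup.add x h) h'
      rw [Gyrogroup.gyroassoc, hze]
    · rintro ⟨h', hh', rfl⟩
      refine ⟨Gyrogroup.gyr x h (Gyrogroup.add (Gyrogroup.neg h) h'),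
        hgyrH x h _ (haddH _ (hnegH h hh) _ hh'), ?_⟩
      show Gyrogroup.add (Gyrogroup.add x h)
          (Gyrogroup.gyr x h (Gyrogroup.add (Gyrogroup.neg h) h')) = Gyrogroup.add x h'
      rw [← Gyrogroup.gyroassoc, GyroAux.add_neg_cancel_left]
  have hmk : ∀ x : G, ∀ h ∈ H,
      Quotient.mk (Gyrogroup.cosetSetoid G H) (Gyrogroup.add x h)
        = Quotient.mk (Gyrogroup.cosetSetoid G H) x :=
    fun x h hh => Quotient.sound (hco x h hh)
  -- the quotient map
  have hqm : IsQuotientMap (Quotient.mk (Gyrogroup.cosetSetoid G H)) :=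
    isQuotientMap_quotient_mk'
  rw [tendsto_nhds] at ha ⊢
  intro S hSopen hS0
  have hWopen : IsOpen (Quotient.mk (Gyrogroup.cosetSetoid G H) ⁻¹' S) :=
    hSopen.preimage hqm.continuous
  have h0W : (Gyrogroup.zero : G) ∈ Quotient.mk (Gyrogroup.cosetSetoid G H) ⁻¹' S := hS0
  have hWsat : ∀ x ∈ Quotient.mk (Gyrogroup.cosetSetoid G H) ⁻¹' S, ∀ h ∈ H,
      Gyrogroup.add x h ∈ Quotient.mk (Gyrogroup.cosetSetoid G H) ⁻¹' S := by
    intro x hx h hh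
    have he := hmk x h hh
    rw [Set.mem_preimage, he]
    exact hx
  obtain ⟨V, hVopen, hV0, hVsub⟩ :=
    hneutral (Quotient.mk (Gyrogroup.cosetSetoid G H) ⁻¹' S) hWopen h0W
  obtain ⟨V', hV'mem, hV'sub⟩ := hbasis.mem_iff.1 (hVopen.mem_nhds hV0)
  have h0Vo : (Gyrogroup.zero : G) ∈ interior V' :=
    mem_interior_iff_mem_nhds.2 (hbasis.mem_of_mem hV'mem)
  -- continuity of the "right division" maps
  have hcont_g : ∀ h : G, Continuous fun z : G =>
      Gyrogroup.add z (Gyrogroup.gyr z h (Gyrogroup.neg h)) := by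
    intro h
    have heq : (fun z : G => Gyrogroup.add z (Gyrogroup.gyr z h (Gyrogroup.neg h)))
        = fun z : G => Gyrogroup.add z
            (Gyrogroup.add (Gyrogroup.neg (Gyrogroup.add z h))
              (Gyrogroup.add z (Gyrogroup.add h (Gyrogroup.neg h)))) := by
      funext z; rw [GyroAux.gyr_eq]
    rw [heq]
    exact GyroAux.cont_add continuous_id
      (GyroAux.cont_add
        (GyroAux.cont_neg (GyroAux.cont_add continuous_id continuous_const))
        (GyroAux.cont_add continuous_id continuous_const))
  -- the saturated open set O
  set O : Set G := Gyrogroup.sAdd (interior V') H with hOdef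
  have hOopen : IsOpen O := by
    rw [isOpen_iff_forall_mem_open]
    rintro y ⟨v, hv, h, hh, rfl⟩
    refine ⟨(fun z : G => Gyrogroup.add z (Gyrogroup.gyr z h (Gyrogroup.neg h))) ⁻¹'
        interior V', ?_, (isOpen_interior).preimage (hcont_g h), ?_⟩
    · intro z hz
      have hw : Gyrogroup.gyr z h (Gyrogroup.neg h) ∈ H := hgyrH z h _ (hnegH h hh)
      exact ⟨Gyrogroup.add z (Gyrogroup.gyr z h (Gyrogroup.neg h)), hz,
        Gyrogroup.gyr z (Gyrogroup.gyr z h (Gyrogroup.neg h))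
          (Gyrogroup.neg (Gyrogroup.gyr z h (Gyrogroup.neg h))),
        hgyrH _ _ _ (hnegH _ hw), GyroAux.star z _⟩
    · show Gyrogroup.add (Gyrogroup.add v h)
          (Gyrogroup.gyr (Gyrogroup.add v h) h (Gyrogroup.neg h)) ∈ interior V'
      rw [GyroAux.star2]
      exact hv
  have hOsat : Quotient.mk (Gyrogroup.cosetSetoid G H) ⁻¹'
      (Quotient.mk (Gyrogroup.cosetSetoid G H) '' O) = O := by
    apply Set.Subset.antisymm
    · rintro x ⟨y, hyO, hyx⟩
      have hrel : Gyrogroup.lcoset y H = Gyrogroup.lcoset x H := Quotient.exact hyx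
      obtain ⟨v, hv, h, hh, rfl⟩ := hyO
      have hx_in : x ∈ Gyrogroup.lcoset x H := ⟨Gyrogroup.zero, h0H, Gyrogroup.add_zero x⟩
      rw [← hrel, hco v h hh] at hx_in
      obtain ⟨h', hh', rfl⟩ := hx_in
      exact ⟨v, hv, h', hh', rfl⟩
    · exact Set.subset_preimage_image _ O
  have hOSopen : IsOpen (Quotient.mk (Gyrogroup.cosetSetoid G H) '' O) := by
    rw [← hqm.isOpen_preimage, hOsat]
    exact hOopen
  have h0OS : Quotient.mk (Gyrogroup.cosetSetoid G H) Gyrogroup.zero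
      ∈ Quotient.mk (Gyrogroup.cosetSetoid G H) '' O :=
    ⟨Gyrogroup.zero, ⟨Gyrogroup.zero, h0Vo, Gyrogroup.zero, h0H, Gyrogroup.zero_add _⟩, rfl⟩
  have hev := ha (Quotient.mk (Gyrogroup.cosetSetoid G H) '' O) hOSopen h0OS
  refine Filter.mem_of_superset hev ?_
  intro n hn
  have hnO : a n ∈ O := by
    have : a n ∈ Quotient.mk (Gyrogroup.cosetSetoid G H) ⁻¹'
        (Quotient.mk (Gyrogroup.cosetSetoid G H) '' O) := hn
    rwa [hOsat] at this
  obtain ⟨v, hv, h, hh, hvh⟩ := hnO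
  show Quotient.mk (Gyrogroup.cosetSetoid G H) (Gyrogroup.neg (a n)) ∈ S
  rw [← hvh, GyroAux.neg_add_rev, Gyrogroup.gyr_add]
  have h1 : Gyrogroup.gyr v h (Gyrogroup.neg h) ∈ H := hgyrH v h _ (hnegH h hh)
  have h2 : Gyrogroup.gyr v h (Gyrogroup.neg v) ∈ V' := by
    have hvV' : v ∈ V' := interior_subset hv
    have hnv : Gyrogroup.neg v ∈ V' := by
      rw [← hsym V' hV'mem]; exact ⟨v, hvV', rfl⟩
    rw [← hgyr V' hV'mem v h]
    exact ⟨_, hnv, rfl⟩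
  have h3 : Gyrogroup.add (Gyrogroup.gyr v h (Gyrogroup.neg h))
      (Gyrogroup.gyr v h (Gyrogroup.neg v)) ∈ Gyrogroup.sAdd H V :=
    ⟨_, h1, _, hV'sub h2, rfl⟩
  obtain ⟨u, hu, h', hh', he⟩ := hVsub h3
  have hfin := hWsat u hu h' hh'
  rw [← he]
  exact hfin
end

section
/- Let G be a strongly topological gyrogroup with symmetric neighborhood base 𝒰 at 0 and H a neutral admissible subgyrogroup generated from 𝒰. Then the character and π-character of the quotient space G/H coincide: πχ(G/H) = χ(G/H). Specifically, if ℬ is a local π-base at π(0) in G/H, then {π(π⁻¹(V) ⊕ (⊖π⁻¹(V))) : V ∈ ℬ} is a local base at π(0) of the same cardinality or less. -/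
open Filter Topology

/-- A local base of open sets at `x`. -/
def IsLocalBase {X : Type*} [TopologicalSpace X] (x : X) (B : Set (Set X)) : Prop :=
  (∀ U ∈ B, x ∈ U ∧ IsOpen U) ∧ ∀ V ∈ 𝓝 x, ∃ U ∈ B, U ⊆ V

/-- A local π-base at `x`: nonempty open sets such that every neighborhood of `x`
contains one of them. -/
def IsLocalPiBase {X : Type*} [TopologicalSpace X] (x : X) (B : Set (Set X)) : Prop :=
  (∀ U ∈ B, U.Nonempty ∧ IsOpen U) ∧ ∀ V ∈ 𝓝 x, ∃ U ∈ B, U ⊆ V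

/-- The character of `X` at `x`: minimal cardinality of a local base. -/
noncomputable def charAt (X : Type*) [TopologicalSpace X] (x : X) : Cardinal :=
  ⨅ B : {B : Set (Set X) // IsLocalBase x B}, Cardinal.mk B.1

/-- The π-character of `X` at `x`: minimal cardinality of a local π-base. -/
noncomputable def piCharAt (X : Type*) [TopologicalSpace X] (x : X) : Cardinal :=
  ⨅ B : {B : Set (Set X) // IsLocalPiBase x B}, Cardinal.mk B.1

/-- The character of a space. -/
noncomputable def spaceChar (X : Type*) [TopologicalSpace X] : Cardinal :=
  ⨆ x : X, charAt X x

/-- The π-character of a space. -/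
noncomputable def spacePiChar (X : Type*) [TopologicalSpace X] : Cardinal :=
  ⨆ x : X, piCharAt X x


namespace Gyrogroup
variable {G : Type*} [Gyrogroup G]

theorem neg_add_gyr (x a : G) : add (neg x) (add x a) = gyr (neg x) x a := by
  rw [gyroassoc, neg_add, zero_add]

theorem addL_injective (x : G) : Function.Injective (add x) := by
  intro a b h
  have h2 := congrArg (add (neg x)) h
  rw [neg_add_gyr, neg_add_gyr] at h2
  exact (gyr_bijective (neg x) x).1 h2

theorem gyr_zero_left (x a : G) : gyr zero x a = a := by
  have := gyroassoc (zero : G) x a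
  rw [zero_add, zero_add] at this
  exact (addL_injective x this).symm

theorem gyr_neg_self (x a : G) : gyr (neg x) x a = a := by
  have h := loop (neg x) x
  rw [neg_add] at h
  rw [← h, gyr_zero_left]

theorem left_cancel (x a : G) : add (neg x) (add x a) = a := by
  rw [neg_add_gyr, gyr_neg_self]

theorem neg_neg (a : G) : neg (neg a) = a :=
  (neg_unique (neg a) a (add_neg a) (neg_add a)).symm

theorem left_cancel' (x a : G) : add x (add (neg x) a) = a := by
  have := left_cancel (neg x) a
  rwa [neg_neg] at this

theorem eq_neg_of_add_eq_zero {z w : G} (h : add z w = zero) : w = neg z := by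
  have := congrArg (add (neg z)) h
  rw [left_cancel, add_zero] at this
  exact this

theorem gyr_zero (x y : G) : gyr x y zero = zero := by
  have := gyroassoc x y zero
  rw [add_zero] at this
  nth_rewrite 1 [← add_zero (add x y)] at this
  exact (addL_injective (add x y) this).symm

theorem gyr_neg (x y a : G) : gyr x y (neg a) = neg (gyr x y a) := by
  apply eq_neg_of_add_eq_zero
  rw [← gyr_add, add_neg, gyr_zero]

theorem neg_add_rev (a b : G) : neg (add a b) = gyr a b (add (neg b) (neg a)) := by
  symm; apply eq_neg_of_add_eq_zero
  rw [← gyroassoc, left_cancel', add_neg]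

end Gyrogroup

namespace Gyrogroup
variable {G : Type*} [Gyrogroup G]

theorem mem_sAdd {A B : Set G} {x : G} :
    x ∈ sAdd A B ↔ ∃ a ∈ A, ∃ b ∈ B, add a b = x := Set.mem_image2

theorem add_mem_sAdd {A B : Set G} {a b : G} (ha : a ∈ A) (hb : b ∈ B) :
    add a b ∈ sAdd A B := Set.mem_image2_of_mem ha hb

theorem sAdd_subset {A B A' B' : Set G} (h1 : A ⊆ A') (h2 : B ⊆ B') :
    sAdd A B ⊆ sAdd A' B' := Set.image2_subset h1 h2

theorem gyr_image_sAdd (x y : G) (A B : Set G) :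
    gyr x y '' sAdd A B = sAdd (gyr x y '' A) (gyr x y '' B) :=
  Set.image_image2_distrib (gyr_add x y)

theorem sNeg_eq_preimage (A : Set G) : sNeg A = neg ⁻¹' A := by
  ext x
  constructor
  · rintro ⟨a, ha, rfl⟩; simpa [Set.mem_preimage, neg_neg] using ha
  · intro hx; exact ⟨neg x, hx, neg_neg x⟩

theorem mem_sNeg {A : Set G} {x : G} : x ∈ sNeg A ↔ neg x ∈ A := by
  rw [sNeg_eq_preimage]; rfl

section coset

variable {H : Set G} (h0 : Gyrogroup.zero ∈ H)
  (hadd : ∀ a ∈ H, ∀ b ∈ H, add a b ∈ H)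
  (hneg : ∀ a ∈ H, neg a ∈ H)
  (hgyrH : ∀ x y : G, gyr x y '' H = H)

theorem mem_lcoset {x y : G} : y ∈ lcoset x H ↔ ∃ h ∈ H, add x h = y := Set.mem_image _ _ _

include hadd hgyrH in
theorem lcoset_subset_of_mem {x y : G} (hy : y ∈ lcoset x H) : lcoset y H ⊆ lcoset x H := by
  obtain ⟨h, hh, rfl⟩ := hy
  rintro z ⟨h', hh', rfl⟩
  obtain ⟨h'', hh'', hgh⟩ : ∃ h'' ∈ H, gyr x h h'' = h' := by
    have := hgyrH x h
    rw [← this] at hh'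
    obtain ⟨w, hw, hww⟩ := hh'
    exact ⟨w, hw, hww⟩
  refine ⟨add h h'', hadd _ hh _ hh'', ?_⟩
  show add x (add h h'') = add (add x h) h'
  rw [gyroassoc, hgh]

include hneg hgyrH in
theorem mem_lcoset_symm {x y : G} (hy : y ∈ lcoset x H) : x ∈ lcoset y H := by
  obtain ⟨h, hh, rfl⟩ := hy
  refine ⟨gyr x h (neg h), ?_, ?_⟩
  · rw [← hgyrH x h]; exact ⟨neg h, hneg _ hh, rfl⟩
  · show add (add x h) (gyr x h (neg h)) = x
    rw [← gyroassoc, add_neg, add_zero]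

include h0 hadd hneg hgyrH in
theorem lcoset_eq_iff {x y : G} : lcoset x H = lcoset y H ↔ y ∈ lcoset x H := by
  constructor
  · intro h
    rw [h]
    exact ⟨zero, h0, add_zero y⟩
  · intro hy
    apply Set.Subset.antisymm
    · exact lcoset_subset_of_mem hadd hgyrH (mem_lcoset_symm hneg hgyrH hy)
    · exact lcoset_subset_of_mem hadd hgyrH hy

end coset
end Gyrogroup

namespace Gyrogroup
variable {G : Type*} [TopologicalSpace G] [TopologicalGyrogroup G]

theorem continuous_addL (a : G) : Continuous (add a) :=
  TopologicalGyrogroup.continuous_add.comp (continuous_const.prodMk continuous_id)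

theorem image_addL (a : G) (S : Set G) : add a '' S = add (neg a) ⁻¹' S := by
  ext y
  constructor
  · rintro ⟨s, hs, rfl⟩; simpa [Set.mem_preimage, left_cancel] using hs
  · intro hy; exact ⟨add (neg a) y, hy, left_cancel' a y⟩

theorem isOpen_image_addL (a : G) {S : Set G} (hS : IsOpen S) : IsOpen (add a '' S) := by
  rw [image_addL]
  exact hS.preimage (continuous_addL (neg a))

theorem mem_nhds_image_addL {a : G} {S : Set G} (hS : S ∈ 𝓝 (zero : G)) :
    add a '' S ∈ 𝓝 a := by
  rw [image_addL]
  have hc : ContinuousAt (add (neg a)) a := (continuous_addL (neg a)).continuousAt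
  have : add (neg a) a = zero := neg_add a
  exact hc.preimage_mem_nhds (by rwa [this])

theorem isOpen_sNeg {S : Set G} (hS : IsOpen S) : IsOpen (sNeg S) := by
  rw [sNeg_eq_preimage]
  exact hS.preimage TopologicalGyrogroup.continuous_neg

theorem isOpen_sAdd_right (A : Set G) {B : Set G} (hB : IsOpen B) : IsOpen (sAdd A B) := by
  have : sAdd A B = ⋃ a ∈ A, add a '' B := by
    ext x; simp [mem_sAdd, Set.mem_image]
  rw [this]
  exact isOpen_biUnion fun a _ => isOpen_image_addL a hB

end Gyrogroup

section quot
open Gyrogroup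
variable {G : Type*} [TopologicalSpace G] [TopologicalGyrogroup G] (H : Set G)

theorem continuous_mkq : Continuous (Quotient.mk (cosetSetoid G H)) := continuous_quot_mk

theorem pi_eq_iff (x y : G) :
    Quotient.mk (cosetSetoid G H) x = Quotient.mk (cosetSetoid G H) y ↔
      lcoset x H = lcoset y H := by
  constructor
  · exact fun h => Quotient.exact h
  · exact fun h => Quotient.sound h

theorem isOpen_quot_iff (S : Set (Quotient (cosetSetoid G H))) :
    IsOpen S ↔ IsOpen (Quotient.mk (cosetSetoid G H) ⁻¹' S) :=
  isOpen_coinduced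

end quot
section lemmas
universe uXY
variable {X Y : Type uXY} [TopologicalSpace X] [TopologicalSpace Y]

theorem isLocalBase_opens (x : X) : IsLocalBase x {U | x ∈ U ∧ IsOpen U} := by
  refine ⟨fun U hU => hU, fun V hV => ?_⟩
  obtain ⟨U, hUV, hUo, hxU⟩ := mem_nhds_iff.1 hV
  exact ⟨U, ⟨hxU, hUo⟩, hUV⟩

instance instNonemptyBases (x : X) : Nonempty {B : Set (Set X) // IsLocalBase x B} :=
  ⟨⟨_, isLocalBase_opens x⟩⟩

theorem IsLocalBase.piBase {x : X} {B : Set (Set X)} (h : IsLocalBase x B) :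
    IsLocalPiBase x B :=
  ⟨fun U hU => ⟨⟨x, (h.1 U hU).1⟩, (h.1 U hU).2⟩, h.2⟩

instance instNonemptyPiBases (x : X) : Nonempty {B : Set (Set X) // IsLocalPiBase x B} :=
  ⟨⟨_, (isLocalBase_opens x).piBase⟩⟩

theorem charAt_le_mk {x : X} {B : Set (Set X)} (h : IsLocalBase x B) :
    charAt X x ≤ Cardinal.mk B :=
  ciInf_le' (fun B : {B : Set (Set X) // IsLocalBase x B} => Cardinal.mk B.1) ⟨B, h⟩

theorem piCharAt_le_mk {x : X} {B : Set (Set X)} (h : IsLocalPiBase x B) :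
    piCharAt X x ≤ Cardinal.mk B :=
  ciInf_le' (fun B : {B : Set (Set X) // IsLocalPiBase x B} => Cardinal.mk B.1) ⟨B, h⟩

theorem piCharAt_le_charAt (x : X) : piCharAt X x ≤ charAt X x :=
  le_ciInf fun B => piCharAt_le_mk B.2.piBase

section transfer
variable {f : X → Y} {g : Y → X} (hf : Continuous f) (hg : Continuous g)
  (hgf : ∀ x, g (f x) = x) (hfg : ∀ y, f (g y) = y)

include hg hgf hfg in
theorem image_isOpen_of_inv {U : Set X} (hU : IsOpen U) : IsOpen (f '' U) := by
  have : f '' U = g ⁻¹' U := by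
    ext y
    constructor
    · rintro ⟨u, hu, rfl⟩; simpa [hgf] using hu
    · intro hy; exact ⟨g y, hy, hfg y⟩
  rw [this]; exact hU.preimage hg

include hf hg hgf hfg in
theorem isLocalBase_image {x : X} {B : Set (Set X)} (h : IsLocalBase x B) :
    IsLocalBase (f x) (Set.image f '' B) := by
  constructor
  · rintro _ ⟨U, hU, rfl⟩
    exact ⟨⟨x, (h.1 U hU).1, rfl⟩, image_isOpen_of_inv hg hgf hfg (h.1 U hU).2⟩
  · intro V hV
    obtain ⟨U, hUB, hUV⟩ := h.2 (f ⁻¹' V) (hf.continuousAt.preimage_mem_nhds hV)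
    exact ⟨f '' U, ⟨U, hUB, rfl⟩, by rintro _ ⟨u, hu, rfl⟩; exact hUV hu⟩

include hf hg hgf hfg in
theorem isLocalPiBase_image {x : X} {B : Set (Set X)} (h : IsLocalPiBase x B) :
    IsLocalPiBase (f x) (Set.image f '' B) := by
  constructor
  · rintro _ ⟨U, hU, rfl⟩
    exact ⟨(h.1 U hU).1.image f, image_isOpen_of_inv hg hgf hfg (h.1 U hU).2⟩
  · intro V hV
    obtain ⟨U, hUB, hUV⟩ := h.2 (f ⁻¹' V) (hf.continuousAt.preimage_mem_nhds hV)
    exact ⟨f '' U, ⟨U, hUB, rfl⟩, by rintro _ ⟨u, hu, rfl⟩; exact hUV hu⟩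

include hf hg hgf hfg in
theorem charAt_le_transfer (x : X) : charAt Y (f x) ≤ charAt X x :=
  le_ciInf fun B =>
    (charAt_le_mk (isLocalBase_image hf hg hgf hfg B.2)).trans Cardinal.mk_image_le

include hf hg hgf hfg in
theorem piCharAt_le_transfer (x : X) : piCharAt Y (f x) ≤ piCharAt X x :=
  le_ciInf fun B =>
    (piCharAt_le_mk (isLocalPiBase_image hf hg hgf hfg B.2)).trans Cardinal.mk_image_le

end transfer
end lemmas

set_option linter.unusedSectionVars false
namespace Gyrogroup

section main
variable {G : Type*} [TopologicalSpace G] [TopologicalGyrogroup G]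

theorem gyr_mem_of_image_eq {A : Set G} {x y a : G} (h : gyr x y '' A = A) (ha : a ∈ A) :
    gyr x y a ∈ A := h ▸ ⟨a, ha, rfl⟩

theorem gyr_surj_of_image_eq {A : Set G} {x y b : G} (h : gyr x y '' A = A) (hb : b ∈ A) :
    ∃ a ∈ A, gyr x y a = b := by
  rw [← h] at hb; obtain ⟨a, ha, rfl⟩ := hb; exact ⟨a, ha, rfl⟩

variable {H : Set G} (h0 : (zero : G) ∈ H)
  (hadd : ∀ a ∈ H, ∀ b ∈ H, add a b ∈ H)
  (hneg : ∀ a ∈ H, neg a ∈ H)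
  (hgyrH : ∀ x y : G, gyr x y '' H = H)

local notation "π" => Quotient.mk (cosetSetoid G H)

include h0 hadd hneg hgyrH in
theorem sat_eq (S : Set G) : π ⁻¹' (π '' S) = sAdd S H := by
  ext x
  constructor
  · rintro ⟨s, hs, hsx⟩
    have h1 : lcoset s H = lcoset x H := Quotient.exact hsx
    have h2 : x ∈ lcoset s H := (lcoset_eq_iff h0 hadd hneg hgyrH).1 h1
    obtain ⟨h, hh, rfl⟩ := h2
    exact add_mem_sAdd hs hh
  · rintro ⟨s, hs, h, hh, rfl⟩
    refine ⟨s, hs, Quotient.sound ?_⟩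
    exact (lcoset_eq_iff h0 hadd hneg hgyrH).2 ⟨h, hh, rfl⟩

include h0 hadd hneg hgyrH in
theorem pi_add_right {x h : G} (hh : h ∈ H) : π (add x h) = π x :=
  (Quotient.sound ((lcoset_eq_iff h0 hadd hneg hgyrH).2 ⟨h, hh, rfl⟩)).symm

variable (𝒰 : Set (Set G))
  (hbasis : (𝓝 (zero : G)).HasBasis (fun U : Set G => U ∈ 𝒰) id)
  (hsym : ∀ U ∈ 𝒰, sNeg U = U)
  (hgyr : ∀ U ∈ 𝒰, ∀ x y : G, gyr x y '' U = U)
  (hneutral : ∀ U : Set G, IsOpen U → (zero : G) ∈ U →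
      ∃ V : Set G, IsOpen V ∧ (zero : G) ∈ V ∧ sAdd H V ⊆ sAdd U H)

include hadd hgyrH hbasis hgyr hneutral in
theorem isOpen_sAdd_H {S : Set G} (hS : IsOpen S) : IsOpen (sAdd S H) := by
  rw [isOpen_iff_mem_nhds]
  rintro _ ⟨u, hu, h, hh, rfl⟩
  have hpre : (add u) ⁻¹' S ∈ 𝓝 (zero : G) := by
    refine (continuous_addL u).continuousAt.preimage_mem_nhds ?_
    rw [add_zero]
    exact hS.mem_nhds hu
  obtain ⟨U₂, hU₂𝒰, hU₂sub⟩ := hbasis.mem_iff.1 hpre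
  have hU₂nhds : U₂ ∈ 𝓝 (zero : G) := hbasis.mem_of_mem hU₂𝒰
  obtain ⟨V, hVo, hV0, hVsub⟩ := hneutral (interior U₂) isOpen_interior
    (mem_interior_iff_mem_nhds.2 hU₂nhds)
  obtain ⟨V₂, hV₂𝒰, hV₂sub⟩ := hbasis.mem_iff.1 (hVo.mem_nhds hV0)
  refine Filter.mem_of_superset (mem_nhds_image_addL (hbasis.mem_of_mem hV₂𝒰)) ?_
  rintro _ ⟨v, hv, rfl⟩
  obtain ⟨v', hv', hgv⟩ := gyr_surj_of_image_eq (hgyr V₂ hV₂𝒰 u h) hv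
  have h1 : add h v' ∈ sAdd (interior U₂) H := hVsub (add_mem_sAdd hh (hV₂sub hv'))
  obtain ⟨u₂, hu₂, h₂, hh₂, he⟩ := h1
  have : add (add u h) v = add (add u u₂) (gyr u u₂ h₂) := by
    rw [← hgv, ← gyroassoc, ← he, gyroassoc]
  rw [this]
  exact add_mem_sAdd (hU₂sub (interior_subset hu₂)) (gyr_mem_of_image_eq (hgyrH u u₂) hh₂)

include h0 hadd hneg hgyrH hbasis hgyr hneutral in
theorem isOpenMap_mk : IsOpenMap (π) := by
  intro S hS
  rw [isOpen_coinduced]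
  show IsOpen (π ⁻¹' (π '' S))
  rw [sat_eq h0 hadd hneg hgyrH]
  exact isOpen_sAdd_H hadd hgyrH 𝒰 hbasis hgyr hneutral hS

include h0 hadd hneg hgyrH hbasis hsym hgyr hneutral in
theorem key_localBase (ℬ : Set (Set (Quotient (cosetSetoid G H))))
    (hℬ : IsLocalPiBase (π zero) ℬ) :
    IsLocalBase (π zero)
      ((fun V => π '' sAdd (π ⁻¹' V) (sNeg (π ⁻¹' V))) '' ℬ) := by
  have hOpenMap := isOpenMap_mk h0 hadd hneg hgyrH 𝒰 hbasis hgyr hneutral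
  constructor
  · rintro _ ⟨V, hV, rfl⟩
    obtain ⟨hVne, hVo⟩ := hℬ.1 V hV
    obtain ⟨q, hq⟩ := hVne
    obtain ⟨w, rfl⟩ := Quot.exists_rep q
    have hw : w ∈ π ⁻¹' V := hq
    constructor
    · exact ⟨zero, ⟨w, hw, neg w, ⟨w, hw, rfl⟩, add_neg w⟩, rfl⟩
    · exact hOpenMap _ (isOpen_sAdd_right _ (isOpen_sNeg (hVo.preimage continuous_quot_mk)))
  · intro N hN
    have hNpre : π ⁻¹' N ∈ 𝓝 (zero : G) :=
      (continuous_quot_mk (r := (cosetSetoid G H).r)).continuousAt.preimage_mem_nhds hN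
    obtain ⟨U₁, hU₁𝒰, hU₁sub⟩ := hbasis.mem_iff.1 hNpre
    have hadd00 : ((fun p : G × G => add p.1 p.2) ⁻¹' U₁) ∈ 𝓝 ((zero : G), (zero : G)) := by
      have h00 : U₁ ∈ 𝓝 ((fun p : G × G => add p.1 p.2) ((zero : G), zero)) := by
        show U₁ ∈ 𝓝 (add zero zero)
        rw [zero_add]
        exact hbasis.mem_of_mem hU₁𝒰
      exact TopologicalGyrogroup.continuous_add.continuousAt.preimage_mem_nhds h00
    rw [nhds_prod_eq] at hadd00
    obtain ⟨A, hA, B, hB, hAB⟩ := Filter.mem_prod_iff.1 hadd00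
    obtain ⟨U, hU𝒰, hUsub⟩ := hbasis.mem_iff.1 (Filter.inter_mem hA hB)
    have hUU : ∀ a ∈ U, ∀ b ∈ U, add a b ∈ U₁ := fun a ha b hb =>
      hAB (Set.mk_mem_prod (hUsub ha).1 (hUsub hb).2)
    have hUnhds : U ∈ 𝓝 (zero : G) := hbasis.mem_of_mem hU𝒰
    obtain ⟨V, hVo, hV0, hVsub⟩ := hneutral (interior U) isOpen_interior
      (mem_interior_iff_mem_nhds.2 hUnhds)
    obtain ⟨U', hU'𝒰, hU'sub⟩ := hbasis.mem_iff.1 (Filter.inter_mem hUnhds (hVo.mem_nhds hV0))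
    have hU'nhds : U' ∈ 𝓝 (zero : G) := hbasis.mem_of_mem hU'𝒰
    have hmemnb : π '' interior U' ∈ 𝓝 (π zero) :=
      (hOpenMap _ isOpen_interior).mem_nhds ⟨zero, mem_interior_iff_mem_nhds.2 hU'nhds, rfl⟩
    obtain ⟨B', hB'ℬ, hB'sub⟩ := hℬ.2 _ hmemnb
    refine ⟨_, ⟨B', hB'ℬ, rfl⟩, ?_⟩
    have hWsub : π ⁻¹' B' ⊆ sAdd U' H := by
      intro x hx
      have hx2 : x ∈ π ⁻¹' (π '' interior U') := hB'sub hx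
      rw [sat_eq h0 hadd hneg hgyrH] at hx2
      exact sAdd_subset interior_subset Set.Subset.rfl hx2
    have hHU' : ∀ x y : G, gyr x y '' sAdd H U' = sAdd H U' := fun x y => by
      rw [gyr_image_sAdd, hgyrH, hgyr U' hU'𝒰]
    rintro _ ⟨p, hp, rfl⟩
    obtain ⟨w₁, hw₁, nw₂, hnw₂, rfl⟩ := hp
    obtain ⟨w₂, hw₂, rfl⟩ := hnw₂
    obtain ⟨u₁, hu₁, h₁, hh₁, rfl⟩ := hWsub hw₁
    obtain ⟨u₂, hu₂, h₂, hh₂, rfl⟩ := hWsub hw₂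
    have hnegmem : neg (add u₂ h₂) ∈ sAdd H U' := by
      rw [neg_add_rev]
      apply gyr_mem_of_image_eq (hHU' u₂ h₂)
      refine add_mem_sAdd (hneg _ hh₂) ?_
      rw [← hsym U' hU'𝒰]
      exact ⟨u₂, hu₂, rfl⟩
    obtain ⟨h₃, hh₃, u₃, hu₃, he₃⟩ := hnegmem
    obtain ⟨c, hc, hgc⟩ := gyr_surj_of_image_eq (hHU' u₁ h₁)
      (show add h₃ u₃ ∈ sAdd H U' from add_mem_sAdd hh₃ hu₃)
    obtain ⟨h₄, hh₄, u₄, hu₄, rfl⟩ := hc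
    have hp1 : add (add u₁ h₁) (neg (add u₂ h₂)) = add u₁ (add h₁ (add h₄ u₄)) := by
      rw [← he₃, ← hgc]
      exact (gyroassoc u₁ h₁ (add h₄ u₄)).symm
    have hq1 : add h₁ (add h₄ u₄) ∈ sAdd H U' := by
      rw [gyroassoc]
      exact add_mem_sAdd (hadd _ hh₁ _ hh₄) (gyr_mem_of_image_eq (hgyr U' hU'𝒰 h₁ h₄) hu₄)
    have hq2 : add h₁ (add h₄ u₄) ∈ sAdd U H :=
      sAdd_subset interior_subset Set.Subset.rfl
        (hVsub (sAdd_subset Set.Subset.rfl (fun x hx => (hU'sub hx).2) hq1))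
    obtain ⟨u₅, hu₅, h₅, hh₅, he₅⟩ := hq2
    have hp2 : add (add u₁ h₁) (neg (add u₂ h₂)) = add (add u₁ u₅) (gyr u₁ u₅ h₅) := by
      rw [hp1, ← he₅, gyroassoc]
    rw [hp2, pi_add_right h0 hadd hneg hgyrH (gyr_mem_of_image_eq (hgyrH u₁ u₅) hh₅)]
    exact hU₁sub (hUU u₁ (hU'sub hu₁).1 u₅ hu₅)

include h0 hadd hneg hgyrH in
theorem quot_homog (a : G) :
    charAt (Quotient (cosetSetoid G H)) (π a) = charAt (Quotient (cosetSetoid G H)) (π zero) ∧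
    piCharAt (Quotient (cosetSetoid G H)) (π a) =
      piCharAt (Quotient (cosetSetoid G H)) (π zero) := by
  have hresp : ∀ b : G, ∀ x y : G, (cosetSetoid G H).r x y → π (add b x) = π (add b y) := by
    intro b x y hxy
    have hy : y ∈ lcoset x H := (lcoset_eq_iff h0 hadd hneg hgyrH).1 hxy
    obtain ⟨h, hh, rfl⟩ := hy
    rw [show add b (add x h) = add (add b x) (gyr b x h) from gyroassoc b x h]
    exact (pi_add_right h0 hadd hneg hgyrH (gyr_mem_of_image_eq (hgyrH b x) hh)).symm
  let f : Quotient (cosetSetoid G H) → Quotient (cosetSetoid G H) :=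
    Quotient.lift (fun x => π (add a x)) (hresp a)
  let g : Quotient (cosetSetoid G H) → Quotient (cosetSetoid G H) :=
    Quotient.lift (fun x => π (add (neg a) x)) (hresp (neg a))
  have hf : Continuous f := continuous_quot_lift _ (continuous_quot_mk.comp (continuous_addL a))
  have hg : Continuous g :=
    continuous_quot_lift _ (continuous_quot_mk.comp (continuous_addL (neg a)))
  have hgf : ∀ q, g (f q) = q := by
    refine Quotient.ind ?_
    intro x
    show π (add (neg a) (add a x)) = π x
    rw [left_cancel]
  have hfg : ∀ q, f (g q) = q := by
    refine Quotient.ind ?_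
    intro x
    show π (add a (add (neg a) x)) = π x
    rw [left_cancel']
  have hfz : f (π zero) = π a := by
    show π (add a zero) = π a
    rw [add_zero]
  have hgz : g (π a) = π zero := by
    show π (add (neg a) a) = π zero
    rw [neg_add]
  constructor
  · refine le_antisymm ?_ ?_
    · have := charAt_le_transfer hf hg hgf hfg (π zero)
      rwa [hfz] at this
    · have := charAt_le_transfer hg hf hfg hgf (π a)
      rwa [hgz] at this
  · refine le_antisymm ?_ ?_
    · have := piCharAt_le_transfer hf hg hgf hfg (π zero)
      rwa [hfz] at this
    · have := piCharAt_le_transfer hg hf hfg hgf (π a)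
      rwa [hgz] at this

end main
end Gyrogroup

/-- For a neutral admissible subgyrogroup `H`, the π-character and the character of
`G/H` coincide; specifically, from any local π-base `ℬ` at `π(0)` the family
`{π(π⁻¹(V) ⊕ ⊖π⁻¹(V)) : V ∈ ℬ}` is a local base at `π(0)` of cardinality `≤ |ℬ|`. -/
theorem quotient_piCharacter_eq_character {G : Type*} [TopologicalSpace G]
    [TopologicalGyrogroup G]
(𝒰 : Set (Set G))
    (hbasis : (𝓝 (Gyrogroup.zero : G)).HasBasis (fun U : Set G => U ∈ 𝒰) id)
    (hsym : ∀ U ∈ 𝒰, Gyrogroup.sNeg U = U)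
    (hgyr : ∀ U ∈ 𝒰, ∀ x y : G, Gyrogroup.gyr x y '' U = U)
    (Useq : ℕ → Set G) (hmem : ∀ n, Useq n ∈ 𝒰) (hopen : ∀ n, IsOpen (Useq n))
    (hchain : ∀ n : ℕ, Gyrogroup.sAdd (Useq (n + 1))
      (Gyrogroup.sAdd (Useq (n + 1)) (Useq (n + 1))) ⊆ Useq n)
    (H : Set G) (hH : H = ⋂ n, Useq n)
    (hneutral : ∀ U : Set G, IsOpen U → Gyrogroup.zero ∈ U →
      ∃ V : Set G, IsOpen V ∧ Gyrogroup.zero ∈ V ∧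
        Gyrogroup.sAdd H V ⊆ Gyrogroup.sAdd U H) :
    spacePiChar (Quotient (Gyrogroup.cosetSetoid G H)) =
      spaceChar (Quotient (Gyrogroup.cosetSetoid G H)) ∧
    (∀ ℬ : Set (Set (Quotient (Gyrogroup.cosetSetoid G H))),
      IsLocalPiBase (Quotient.mk (Gyrogroup.cosetSetoid G H) Gyrogroup.zero) ℬ →
      IsLocalBase (Quotient.mk (Gyrogroup.cosetSetoid G H) Gyrogroup.zero)
        ((fun V => Quotient.mk (Gyrogroup.cosetSetoid G H) ''
          Gyrogroup.sAdd (Quotient.mk (Gyrogroup.cosetSetoid G H) ⁻¹' V)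
            (Gyrogroup.sNeg (Quotient.mk (Gyrogroup.cosetSetoid G H) ⁻¹' V))) '' ℬ) ∧
      Cardinal.mk ↥((fun V => Quotient.mk (Gyrogroup.cosetSetoid G H) ''
          Gyrogroup.sAdd (Quotient.mk (Gyrogroup.cosetSetoid G H) ⁻¹' V)
            (Gyrogroup.sNeg (Quotient.mk (Gyrogroup.cosetSetoid G H) ⁻¹' V))) '' ℬ) ≤
        Cardinal.mk ↥ℬ) := by
  have h0 : (Gyrogroup.zero : G) ∈ H := by
    rw [hH]
    exact Set.mem_iInter.2 fun n => mem_of_mem_nhds (hbasis.mem_of_mem (hmem n))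
  have haddH : ∀ a ∈ H, ∀ b ∈ H, Gyrogroup.add a b ∈ H := by
    intro a ha b hb
    rw [hH] at ha hb ⊢
    refine Set.mem_iInter.2 fun n => ?_
    have h1 : Gyrogroup.add a (Gyrogroup.add b Gyrogroup.zero) ∈ Useq n :=
      hchain n (Gyrogroup.add_mem_sAdd (Set.mem_iInter.1 ha (n + 1))
        (Gyrogroup.add_mem_sAdd (Set.mem_iInter.1 hb (n + 1))
          (mem_of_mem_nhds (hbasis.mem_of_mem (hmem (n + 1))))))
    rwa [Gyrogroup.add_zero] at h1
  have hnegH : ∀ a ∈ H, Gyrogroup.neg a ∈ H := by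
    intro a ha
    rw [hH] at ha ⊢
    refine Set.mem_iInter.2 fun n => ?_
    rw [← hsym _ (hmem n)]
    exact ⟨a, Set.mem_iInter.1 ha n, rfl⟩
  have hgyrH : ∀ x y : G, Gyrogroup.gyr x y '' H = H := by
    intro x y
    rw [hH, Set.image_iInter (Gyrogroup.gyr_bijective x y)]
    exact Set.iInter_congr fun n => hgyr _ (hmem n) x y
  have key := fun ℬ hℬ =>
    Gyrogroup.key_localBase h0 haddH hnegH hgyrH 𝒰 hbasis hsym hgyr hneutral ℬ hℬ
  refine ⟨?_, fun ℬ hℬ => ⟨key ℬ hℬ, Cardinal.mk_image_le⟩⟩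
  unfold spacePiChar spaceChar
  refine congrArg _ (funext fun q => ?_)
  obtain ⟨a, rfl⟩ := Quot.exists_rep q
  have hhom := Gyrogroup.quot_homog h0 haddH hnegH hgyrH a
  show piCharAt _ (Quotient.mk (Gyrogroup.cosetSetoid G H) a) =
    charAt _ (Quotient.mk (Gyrogroup.cosetSetoid G H) a)
  rw [hhom.2, hhom.1]
  refine le_antisymm (piCharAt_le_charAt _) ?_
  refine le_ciInf fun B => ?_
  exact (charAt_le_mk (key B.1 B.2)).trans Cardinal.mk_image_le
end
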